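/- arXiv:1512.05479 — 2 statements merged into one kernel-verified Lean document; each statement's English description precedes it below -/
import Mathlib

section
/- For every natural number k ≥ 1, the (k+1)-st iterated complex derivative of the function g(z) = z/(z+i)^k, evaluated at z = i, equals (2k-1)!/((k-1)! · 4^k). -/
/-! Write `z / (z + i)^k = z * h z` with `h z = (z + i)^(-k)`. Since the factor `z` has vanishing
second derivative, Leibniz' rule gives `g^(k+1)(i) = i h^(k+1)(i) + (k+1) h^(k)(i)`, and
`h^(n)(z) = (-1)^n k(k+1)⋯(k+n-1) (z+i)^(-k-n)`. At `z = i` we have `(2i)^2 = -4`, and the two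
terms combine to `k(k+1)⋯(2k-1) / 4^k = (2k-1)! / ((k-1)! 4^k)`. -/

open Complex

section

variable {𝕜 : Type*} [NontriviallyNormedField 𝕜]

open Finset in
theorem iteratedDeriv_fun_id_mul {f : 𝕜 → 𝕜} {x : 𝕜} {n : ℕ}
    (hf : ContDiffAt 𝕜 (n + 1 : ℕ) f x) :
    iteratedDeriv (n + 1) (fun z => z * f z) x
      = x * iteratedDeriv (n + 1) f x + (n + 1) * iteratedDeriv n f x := by
  rw [iteratedDeriv_fun_mul contDiffAt_fun_id hf, sum_range_succ', sum_range_succ',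
    sum_eq_zero fun i _ => by simp [iteratedDeriv_fun_id]]
  simp [iteratedDeriv_fun_id]
  ring

theorem iteratedDeriv_zpow_add_const (m : ℤ) (n : ℕ) (a x : 𝕜) :
    iteratedDeriv n (fun z => (z + a) ^ m) x
      = (∏ i ∈ Finset.range n, ((m : 𝕜) - i)) * (x + a) ^ (m - n) := by
  rw [iteratedDeriv_comp_add_const n (· ^ m) a, iteratedDeriv_eq_iterate]
  exact iter_deriv_zpow m (x + a) n

theorem prod_range_neg_natCast_sub {R : Type*} [CommRing R] (k n : ℕ) :
    ∏ i ∈ Finset.range n, (-(k : R) - i) = (-1) ^ n * k.ascFactorial n := by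
  rw [Nat.ascFactorial_eq_prod_range, Nat.cast_prod, ← Finset.card_range n, ← Finset.prod_const,
    Finset.card_range, ← Finset.prod_mul_distrib]
  refine Finset.prod_congr rfl fun i _ => ?_
  push_cast
  ring

theorem iteratedDeriv_add_const_zpow_neg (k n : ℕ) (a x : 𝕜) :
    iteratedDeriv n (fun z => (z + a) ^ (-(k : ℤ))) x
      = (-1) ^ n * k.ascFactorial n * (x + a) ^ (-((k + n : ℕ) : ℤ)) := by
  rw [iteratedDeriv_zpow_add_const, ← prod_range_neg_natCast_sub]
  push_cast
  ring_nf

theorem contDiffAt_add_const_zpow_neg (k n : ℕ) {a x : 𝕜} (h : x + a ≠ 0) :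
    ContDiffAt 𝕜 n (fun z => (z + a) ^ (-(k : ℤ))) x := by
  have : ContDiffAt 𝕜 n (fun z => ((z + a) ^ k)⁻¹) x := by
    fun_prop (disch := exact pow_ne_zero _ h)
  simpa only [zpow_neg, zpow_natCast] using this

end

/-- For `k ≥ 1`, the `(k+1)`-st iterated complex derivative of `g(z) = z/(z+i)^k`
at `z = i` equals `(2k-1)!/((k-1)! · 4^k)`. -/
theorem stmt_2 (k : ℕ) (hk : 1 ≤ k) :
    iteratedDeriv (k + 1) (fun z : ℂ => z / (z + I) ^ k) I
      = (Nat.factorial (2 * k - 1) : ℂ) / ((Nat.factorial (k - 1) : ℂ) * 4 ^ k) := by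
  obtain ⟨m, rfl⟩ := Nat.exists_eq_add_of_le' hk
  have hg : (fun z : ℂ => z / (z + I) ^ (m + 1))
      = fun z => z * (z + I) ^ (-((m + 1 : ℕ) : ℤ)) := by
    funext z
    rw [zpow_neg, zpow_natCast, div_eq_mul_inv]
  rw [hg, iteratedDeriv_fun_id_mul (contDiffAt_add_const_zpow_neg _ _ (by simp)),
    iteratedDeriv_add_const_zpow_neg, iteratedDeriv_add_const_zpow_neg]
  have hsq : (I + I) ^ 2 = -4 := by
    rw [← two_mul, mul_pow, I_sq]
    norm_num
  have hA : (m + 1).ascFactorial (m + 1 + 1) = (2 * m + 2) * (m + 1).ascFactorial (m + 1) := by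
    rw [Nat.ascFactorial_succ]
    ring_nf
  have hfact : m.factorial * (m + 1).ascFactorial (m + 1) = (2 * m + 1).factorial := by
    rw [Nat.factorial_mul_ascFactorial]
    ring_nf
  rw [show 2 * (m + 1) - 1 = 2 * m + 1 by omega, Nat.add_sub_cancel, ← hfact, hA]
  simp only [zpow_neg, zpow_natCast, show m + 1 + (m + 1 + 1) = 2 * (m + 1) + 1 by ring,
    show m + 1 + (m + 1) = 2 * (m + 1) by ring, pow_succ _ (2 * (m + 1)), pow_mul, hsq,
    neg_eq_neg_one_mul (4 : ℂ), mul_pow]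
  have hf : (m.factorial : ℂ) ≠ 0 := mod_cast m.factorial_ne_zero
  push_cast
  field_simp
  ring
end

section
/- For every natural number k ≥ 1, the improper complex integral ∫_{-∞}^{∞} x/((x-i)^2 (1+x^2)^k) dx equals πi·(2k-1)!/(2^{2k-1}·(k+1)!·(k-1)!). -/
/-!
Substitute `x = tan θ`. Then `dx = sec² θ dθ`, `1 + x² = sec² θ` and, since
`(sin θ - i cos θ)(sin θ + i cos θ) = 1`, `1 / (x - i)² = cos² θ (sin θ + i cos θ)²`.
The integrand becomes an odd real function of `θ ∈ (-π/2, π/2)` plus `2i sin² θ cos^{2k} θ`.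
On `[-π/2, π/2]` the boundary terms of the reduction formula for `∫ cos^n` vanish, so
`∫ sin² cos^{2k} = (∫ cos^{2k}) / (2k + 2)`, and `∫ cos^{2k}` is the Wallis integral
`π (2k)! / (4^k (k!)²)`.
-/

open MeasureTheory Complex

open Real Set

theorem Function.Odd.intervalIntegral_eq_zero {E : Type*} [NormedAddCommGroup E]
    [NormedSpace ℝ E] {f : ℝ → E} (hf : f.Odd) (a : ℝ) : ∫ x in -a..a, f x = 0 := by
  have h := intervalIntegral.integral_comp_neg (a := -a) (b := a) f
  simp only [hf _, intervalIntegral.integral_neg, neg_neg] at h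
  have h2 : (2 : ℝ) • ∫ x in -a..a, f x = 0 := by
    rw [two_smul]; nth_rewrite 1 [← h]; exact neg_add_cancel _
  exact (smul_eq_zero.mp h2).resolve_left two_ne_zero

theorem integral_eq_intervalIntegral_tan {E : Type*} [NormedAddCommGroup E] [NormedSpace ℝ E]
    (g : ℝ → E) :
    ∫ x, g x = ∫ θ in -(π / 2)..π / 2, (Real.cos θ ^ 2)⁻¹ • g (Real.tan θ) := by
  have hderiv : ∀ θ ∈ Ioo (-(π / 2)) (π / 2),
      HasDerivWithinAt Real.tan (Real.cos θ ^ 2)⁻¹ (Ioo (-(π / 2)) (π / 2)) θ :=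
    fun θ hθ => by simpa using (hasDerivAt_tan (cos_pos_of_mem_Ioo hθ).ne').hasDerivWithinAt
  rw [← setIntegral_univ, ← image_tan_Ioo,
    integral_image_eq_integral_abs_deriv_smul measurableSet_Ioo hderiv injOn_tan g,
    intervalIntegral.integral_of_le (by linarith [pi_pos]), integral_Ioc_eq_integral_Ioo]
  refine setIntegral_congr_fun measurableSet_Ioo fun θ hθ => ?_
  rw [abs_of_pos (by have := cos_pos_of_mem_Ioo hθ; positivity)]

theorem inv_sq_mul_div_sub_I_sq_mul_one_add_sq_pow {S C : ℂ} (hC : C ≠ 0)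
    (h : S ^ 2 + C ^ 2 = 1) (n : ℕ) :
    (C ^ 2)⁻¹ * (S / C / ((S / C - I) ^ 2 * (1 + (S / C) ^ 2) ^ (n + 1)))
      = S * C ^ (2 * n + 1) * (S ^ 2 - C ^ 2) + 2 * (S ^ 2 * C ^ (2 * n + 2)) * I := by
  have hconj : (S - I * C) * (S + I * C) = 1 := by linear_combination h - C ^ 2 * I_sq
  have hSC : S - I * C ≠ 0 := left_ne_zero_of_mul_eq_one hconj
  have hsec : 1 + (S / C) ^ 2 = (C ^ 2)⁻¹ := by field_simp; linear_combination h
  calc _ = S * C ^ (2 * n + 1) / (S - I * C) ^ 2 := by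
        rw [hsec, show S / C - I = (S - I * C) / C by field_simp, inv_pow, ← pow_mul, div_pow]
        field_simp
        ring
    _ = _ := by
        rw [div_eq_mul_inv, ← inv_pow, inv_eq_of_mul_eq_one_right hconj]
        linear_combination S * C ^ (2 * n + 3) * I_sq

theorem inv_cos_sq_smul_tan_div_sub_I_sq (θ : ℝ) (n : ℕ) :
    (Real.cos θ ^ 2)⁻¹ • ((Real.tan θ : ℂ) /
        (((Real.tan θ : ℂ) - I) ^ 2 * (1 + (Real.tan θ : ℂ) ^ 2) ^ (n + 1)))
      = ((Real.sin θ * Real.cos θ ^ (2 * n + 1) *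
            (Real.sin θ ^ 2 - Real.cos θ ^ 2) : ℝ) : ℂ)
        + ((2 * (Real.sin θ ^ 2 * Real.cos θ ^ (2 * n + 2)) : ℝ) : ℂ) * I := by
  rcases eq_or_ne (Real.cos θ) 0 with hcos | hcos
  · -- both sides vanish, the left one because `0⁻¹ = 0`
    simp [hcos]
  · rw [Complex.real_smul, Real.tan_eq_sin_div_cos]
    push_cast
    exact inv_sq_mul_div_sub_I_sq_mul_one_add_sq_pow
      (by rw [← ofReal_cos]; exact_mod_cast hcos) (Complex.sin_sq_add_cos_sq _) n

theorem integral_cos_pow_add_two_pi_div_two (n : ℕ) :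
    ∫ θ in -(π / 2)..π / 2, Real.cos θ ^ (n + 2)
      = (n + 1) / (n + 2) * ∫ θ in -(π / 2)..π / 2, Real.cos θ ^ n := by
  simp [integral_cos_pow]

theorem integral_cos_pow_even_pi_div_two (n : ℕ) :
    ∫ θ in -(π / 2)..π / 2, Real.cos θ ^ (2 * n)
      = π * (2 * n).factorial / (4 ^ n * n.factorial ^ 2) := by
  induction n with
  | zero => simp
  | succ n ih =>
    rw [mul_add_one, integral_cos_pow_add_two_pi_div_two, ih]
    push_cast [Nat.factorial_succ]
    field_simp
    ring

theorem integral_sin_sq_mul_cos_pow_pi_div_two (n : ℕ) :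
    ∫ θ in -(π / 2)..π / 2, Real.sin θ ^ 2 * Real.cos θ ^ n
      = (∫ θ in -(π / 2)..π / 2, Real.cos θ ^ n) / (n + 2) := by
  simp_rw [Real.sin_sq, sub_mul, one_mul, ← pow_add, add_comm 2 n]
  rw [intervalIntegral.integral_sub (by apply Continuous.intervalIntegrable; fun_prop)
    (by apply Continuous.intervalIntegrable; fun_prop), integral_cos_pow_add_two_pi_div_two]
  field_simp
  ring

theorem integral_two_mul_sin_sq_mul_cos_pow_pi_div_two (n : ℕ) :
    ∫ θ in -(π / 2)..π / 2, 2 * (Real.sin θ ^ 2 * Real.cos θ ^ (2 * n + 2))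
      = π * (2 * n + 1).factorial / (2 ^ (2 * n + 1) * (n + 2).factorial * n.factorial) := by
  rw [intervalIntegral.integral_const_mul, integral_sin_sq_mul_cos_pow_pi_div_two,
    show 2 * n + 2 = 2 * (n + 1) by ring, integral_cos_pow_even_pi_div_two,
    show 2 * (n + 1) = 2 * n + 1 + 1 by ring, Nat.factorial_succ (2 * n + 1),
    Nat.factorial_succ (n + 1), Nat.factorial_succ n, pow_succ 2 (2 * n), pow_mul,
    show (4 : ℝ) = 2 ^ 2 by norm_num]
  push_cast
  field_simp
  ring

/-- For `k ≥ 1`, `∫_{-∞}^{∞} x/((x-i)² (1+x²)^k) dx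
  = πi·(2k-1)!/(2^{2k-1}·(k+1)!·(k-1)!)`. -/
theorem stmt_3 (k : ℕ) (hk : 1 ≤ k) :
    ∫ x : ℝ, (x : ℂ) / (((x : ℂ) - I) ^ 2 * (1 + (x : ℂ) ^ 2) ^ k)
      = (Real.pi : ℂ) * I * (Nat.factorial (2 * k - 1) : ℂ) /
        (2 ^ (2 * k - 1) * (Nat.factorial (k + 1) : ℂ) * (Nat.factorial (k - 1) : ℂ)) := by
  obtain ⟨n, rfl⟩ : ∃ n, k = n + 1 := ⟨k - 1, by omega⟩
  have hodd : Function.Odd fun θ =>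
      Real.sin θ * Real.cos θ ^ (2 * n + 1) * (Real.sin θ ^ 2 - Real.cos θ ^ 2) := by
    intro θ; simp only [Real.sin_neg, Real.cos_neg]; ring
  simp_rw [integral_eq_intervalIntegral_tan, inv_cos_sq_smul_tan_div_sub_I_sq]
  rw [intervalIntegral.integral_add (by apply Continuous.intervalIntegrable; fun_prop)
      (by apply Continuous.intervalIntegrable; fun_prop), intervalIntegral.integral_mul_const,
    intervalIntegral.integral_ofReal, intervalIntegral.integral_ofReal,
    hodd.intervalIntegral_eq_zero, integral_two_mul_sin_sq_mul_cos_pow_pi_div_two,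
    show 2 * (n + 1) - 1 = 2 * n + 1 by omega, Nat.add_sub_cancel]
  push_cast
  ring
end
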